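/- arXiv:2404.04467 — 5 statements merged into one kernel-verified Lean document; each statement's English description precedes it below -/
import Mathlib

section
/- Let U ⊆ ℝ^N be an open set, D : U → ℝ^N a continuously differentiable map whose Jacobian J_D(p) satisfies σ_min(J_D(p)) ≥ σ_D > 0 for all p ∈ U, and H : ℝ^N → ℝ a continuously differentiable σ_φ-strongly concave function. Define G : U → ℝ by G(p) = H(D(p)), and suppose p* ∈ U satisfies ∇H(D(p*)) = 0 (so p* maximizes G). Then for every p ∈ U, (1/2) ‖∇G(p)‖₂² ≥ σ_D² σ_φ ( G(p*) − G(p) ). -/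
open scoped RealInnerProductSpace

open Set

/-! Strong concavity of `H` bounds its gap `H d' - H d` by `‖∇H d‖² / (2σ_φ)`: maximise the
quadratic upper model `H d + ⟪∇H d, d' - d⟫ - σ_φ/2 ‖d' - d‖²`. By the chain rule
`∇(H ∘ D) p = J_D(p)ᵀ ∇H(D p)`, and a square matrix with `‖J v‖ ≥ σ_D ‖v‖` is invertible, so its
transpose satisfies the same bound; hence `‖∇(H ∘ D) p‖ ≥ σ_D ‖∇H(D p)‖`. -/

theorem ConcaveOn.le_add_fderiv {E : Type*} [NormedAddCommGroup E] [NormedSpace ℝ E]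
    {f : E → ℝ} (hf : ConcaveOn ℝ univ f) {x : E} (hfx : DifferentiableAt ℝ f x) (y : E) :
    f y ≤ f x + fderiv ℝ f x (y - x) := by
  have hline : ConcaveOn ℝ univ (f ∘ AffineMap.lineMap (k := ℝ) x y) := by
    simpa using hf.comp_affineMap (AffineMap.lineMap (k := ℝ) x y)
  have hderiv : HasDerivAt (f ∘ AffineMap.lineMap (k := ℝ) x y) (fderiv ℝ f x (y - x)) 0 := by
    refine HasFDerivAt.comp_hasDerivAt (0 : ℝ) ?_ AffineMap.hasDerivAt_lineMap
    simpa using hfx.hasFDerivAt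
  have := hline.slope_le_of_hasDerivAt (mem_univ 0) (mem_univ 1) one_pos hderiv
  simp only [slope_def_field, Function.comp_apply, AffineMap.lineMap_apply_zero,
    AffineMap.lineMap_apply_one, sub_zero, div_one] at this
  linarith

section InnerProductSpace

variable {E : Type*} [NormedAddCommGroup E] [InnerProductSpace ℝ E]

theorem StrongConcaveOn.add_norm_sub_sq_le_add_fderiv {f : E → ℝ} {m : ℝ}
    (hf : StrongConcaveOn univ m f) {x : E} (hfx : DifferentiableAt ℝ f x) (y : E) :
    f y + m / 2 * ‖y - x‖ ^ 2 ≤ f x + fderiv ℝ f x (y - x) := by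
  have hKd :=
    hfx.hasFDerivAt.fun_add ((hasStrictFDerivAt_norm_sq x).hasFDerivAt.const_mul (m / 2))
  have hK := (strongConcaveOn_iff_convex.mp hf).le_add_fderiv hKd.differentiableAt y
  rw [hKd.fderiv] at hK
  simp only [add_apply, smul_apply, innerSL_apply_apply, smul_eq_mul,
    nsmul_eq_mul, inner_sub_right, real_inner_self_eq_norm_sq] at hK
  rw [norm_sub_sq_real, real_inner_comm]
  linarith

theorem StrongConcaveOn.mul_sub_le_norm_gradient_sq_div_two [CompleteSpace E] {f : E → ℝ}
    {m : ℝ} (hf : StrongConcaveOn univ m f) (hm : 0 ≤ m) {x : E} (hfx : DifferentiableAt ℝ f x)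
    (y : E) :
    m * (f y - f x) ≤ ‖gradient f x‖ ^ 2 / 2 := by
  have hfoc := hf.add_norm_sub_sq_le_add_fderiv hfx y
  rw [← inner_gradient_left] at hfoc
  have hCS := real_inner_le_norm (gradient f x) (y - x)
  nlinarith [sq_nonneg (‖gradient f x‖ - m * ‖y - x‖)]

theorem gradient_fun_comp {F : Type*} [NormedAddCommGroup F] [InnerProductSpace ℝ F]
    [CompleteSpace E] [CompleteSpace F] {f : F → ℝ} {g : E → F} {x : E}
    (hf : DifferentiableAt ℝ f (g x)) (hg : DifferentiableAt ℝ g x) :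
    gradient (fun y => f (g y)) x = (fderiv ℝ g x).adjoint (gradient f (g x)) := by
  refine ext_inner_right ℝ fun v => ?_
  rw [inner_gradient_left, ContinuousLinearMap.adjoint_inner_left, inner_gradient_left,
    fderiv_fun_comp x hf hg, ContinuousLinearMap.comp_apply]

theorem ContinuousLinearMap.mul_norm_le_norm_adjoint_apply [FiniteDimensional ℝ E]
    {A : E →L[ℝ] E} {σ : ℝ} (hσ : 0 < σ)
    (hA : ∀ v, σ * ‖v‖ ≤ ‖A v‖) (w : E) : σ * ‖w‖ ≤ ‖A.adjoint w‖ := by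
  have hinj : Function.Injective A := by
    refine (injective_iff_map_eq_zero A).mpr fun v hv => norm_le_zero_iff.mp ?_
    have := hA v
    rw [hv, norm_zero] at this
    nlinarith [norm_nonneg v]
  obtain ⟨v, rfl⟩ : ∃ v, A v = w := LinearMap.injective_iff_surjective.mp hinj w
  have hCS : ‖A v‖ ^ 2 ≤ ‖A.adjoint (A v)‖ * ‖v‖ := by
    rw [← real_inner_self_eq_norm_sq, ← ContinuousLinearMap.adjoint_inner_left]
    exact real_inner_le_norm _ _
  rcases eq_or_ne v 0 with rfl | hv
  · simp
  · refine le_of_mul_le_mul_right ?_ (norm_pos_iff.mpr hv)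
    calc σ * ‖A v‖ * ‖v‖ = σ * ‖v‖ * ‖A v‖ := by ring
      _ ≤ ‖A v‖ * ‖A v‖ := by gcongr; exact hA v
      _ = ‖A v‖ ^ 2 := (sq _).symm
      _ ≤ ‖A.adjoint (A v)‖ * ‖v‖ := hCS

end InnerProductSpace

theorem stmt_5_general {N : ℕ}
    (U : Set (EuclideanSpace ℝ (Fin N))) (hU : IsOpen U)
    (D : EuclideanSpace ℝ (Fin N) → EuclideanSpace ℝ (Fin N))
    (hD : ContDiffOn ℝ 1 D U)
    (σD : ℝ) (hσD : 0 < σD)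
    (hJ : ∀ p ∈ U, ∀ v : EuclideanSpace ℝ (Fin N), σD * ‖v‖ ≤ ‖fderiv ℝ D p v‖)
    (σφ : ℝ) (hσφ : 0 < σφ)
    (H : EuclideanSpace ℝ (Fin N) → ℝ) (hHC1 : ContDiff ℝ 1 H)
    (hHconc : StrongConcaveOn Set.univ σφ H)
    (pstar : EuclideanSpace ℝ (Fin N)) :
    ∀ p ∈ U,
      σD ^ 2 * σφ * (H (D pstar) - H (D p))
        ≤ (1 / 2) * ‖gradient (fun q => H (D q)) p‖ ^ 2 := by
  intro p hp
  have hDp : DifferentiableAt ℝ D p :=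
    (hD.contDiffAt (hU.mem_nhds hp)).differentiableAt one_ne_zero
  have hHp : DifferentiableAt ℝ H (D p) := hHC1.differentiable one_ne_zero (D p)
  have hgap := hHconc.mul_sub_le_norm_gradient_sq_div_two hσφ.le hHp (D pstar)
  have hgrad : σD * ‖gradient H (D p)‖ ≤ ‖gradient (fun q => H (D q)) p‖ := by
    rw [gradient_fun_comp hHp hDp]
    exact (fderiv ℝ D p).mul_norm_le_norm_adjoint_apply hσD (hJ p hp) _
  calc σD ^ 2 * σφ * (H (D pstar) - H (D p))
      = σD ^ 2 * (σφ * (H (D pstar) - H (D p))) := by ring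
    _ ≤ σD ^ 2 * (‖gradient H (D p)‖ ^ 2 / 2) := by gcongr
    _ = (1 / 2) * (σD * ‖gradient H (D p)‖) ^ 2 := by ring
    _ ≤ (1 / 2) * ‖gradient (fun q => H (D q)) p‖ ^ 2 := by gcongr

/-- Polyak–Łojasiewicz inequality, Lemma 6 of the paper: let
`U ⊆ ℝ^N` be open, `D : U → ℝ^N` continuously differentiable with
`σ_min(J_D(p)) ≥ σ_D > 0` on `U`, and `H : ℝ^N → ℝ` continuously
differentiable and `σ_φ`-strongly concave. If `G = H ∘ D` and `p* ∈ U`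
satisfies `∇H(D(p*)) = 0` (so `p*` maximizes `G`), then for every `p ∈ U`,
`(1/2) ‖∇G(p)‖² ≥ σ_D² σ_φ (G(p*) − G(p))`. -/
theorem stmt_5 {N : ℕ}
    (U : Set (EuclideanSpace ℝ (Fin N))) (hU : IsOpen U)
    (D : EuclideanSpace ℝ (Fin N) → EuclideanSpace ℝ (Fin N))
    (hD : ContDiffOn ℝ 1 D U)
    (σD : ℝ) (hσD : 0 < σD)
    (hJ : ∀ p ∈ U, ∀ v : EuclideanSpace ℝ (Fin N), σD * ‖v‖ ≤ ‖fderiv ℝ D p v‖)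
    (σφ : ℝ) (hσφ : 0 < σφ)
    (H : EuclideanSpace ℝ (Fin N) → ℝ) (hHC1 : ContDiff ℝ 1 H)
    (hHconc : StrongConcaveOn Set.univ σφ H)
    (pstar : EuclideanSpace ℝ (Fin N)) (hpstar : pstar ∈ U)
    (hcrit : gradient H (D pstar) = 0) :
    ∀ p ∈ U,
      σD ^ 2 * σφ * (H (D pstar) - H (D p))
        ≤ (1 / 2) * ‖gradient (fun q => H (D q)) p‖ ^ 2 :=
  stmt_5_general U hU D hD σD hσD hJ σφ hσφ H hHC1 hHconc pstar
end

section
/- Let U ⊆ ℝ^N be an open convex set and D : U → ℝ^N a continuously differentiable map whose Jacobian satisfies ‖J_D(x) − J_D(y)‖_op ≤ L_D ‖x − y‖₂ for all x, y ∈ U. Let p, q ∈ U be such that the reflected point p̃ = 2q − p also lies in U. Then ‖ (D(p) + D(p̃))/2 − D(q) ‖₂ ≤ L_D ‖p − q‖₂². -/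
/-!
Taylor's formula with a Lipschitz derivative bounds `D (q ± h) - D q ∓ D'(q) h` by `L_D ‖h‖²`;
averaging the two expansions at `p = q + h` and `2q - p = q - h` cancels the linear terms.
-/

section LipschitzFDeriv

variable {E F : Type*} [NormedAddCommGroup E] [NormedSpace ℝ E]
  [NormedAddCommGroup F] [NormedSpace ℝ F]
  {U : Set E} {D : E → F} {L : ℝ}

theorem norm_sub_sub_fderiv_le_of_lipschitz_fderiv (hU : IsOpen U) (hUconv : Convex ℝ U)
    (hD : DifferentiableOn ℝ D U)
    (hL : ∀ x ∈ U, ∀ y ∈ U, ‖fderiv ℝ D x - fderiv ℝ D y‖ ≤ L * ‖x - y‖)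
    {a b : E} (ha : a ∈ U) (hb : b ∈ U) :
    ‖D b - D a - fderiv ℝ D a (b - a)‖ ≤ L * ‖b - a‖ ^ 2 := by
  rcases eq_or_ne a b with rfl | hab
  · simp
  have hL0 : 0 ≤ L := by
    have hpos : 0 < ‖a - b‖ := norm_pos_iff.2 (sub_ne_zero.2 hab)
    nlinarith [hL a ha b hb, norm_nonneg (fderiv ℝ D a - fderiv ℝ D b)]
  have hseg : segment ℝ a b ⊆ U := hUconv.segment_subset ha hb
  have hderiv : ∀ x ∈ segment ℝ a b, HasFDerivWithinAt D (fderiv ℝ D x) (segment ℝ a b) x :=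
    fun x hx => ((hD x (hseg hx)).differentiableAt (hU.mem_nhds (hseg hx))).hasFDerivAt
      |>.hasFDerivWithinAt
  have hbound : ∀ x ∈ segment ℝ a b, ‖fderiv ℝ D x - fderiv ℝ D a‖ ≤ L * ‖b - a‖ := by
    intro x hx
    have hxa : ‖x - a‖ ≤ ‖b - a‖ := by
      rw [← dist_eq_norm, ← dist_eq_norm, dist_comm x, dist_comm b]
      linarith [dist_add_dist_of_mem_segment hx, dist_nonneg (x := x) (y := b)]
    exact (hL x (hseg hx) a ha).trans (mul_le_mul_of_nonneg_left hxa hL0)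
  calc ‖D b - D a - fderiv ℝ D a (b - a)‖ ≤ L * ‖b - a‖ * ‖b - a‖ :=
        Convex.norm_image_sub_le_of_norm_hasFDerivWithin_le' hderiv hbound (convex_segment a b)
          (left_mem_segment ℝ a b) (right_mem_segment ℝ a b)
    _ = L * ‖b - a‖ ^ 2 := by ring

theorem norm_inv_two_smul_add_reflect_sub_le_of_lipschitz_fderiv (hU : IsOpen U)
    (hUconv : Convex ℝ U) (hD : DifferentiableOn ℝ D U)
    (hL : ∀ x ∈ U, ∀ y ∈ U, ‖fderiv ℝ D x - fderiv ℝ D y‖ ≤ L * ‖x - y‖)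
    {p q : E} (hp : p ∈ U) (hq : q ∈ U) (hrefl : (2 : ℝ) • q - p ∈ U) :
    ‖(2 : ℝ)⁻¹ • (D p + D ((2 : ℝ) • q - p)) - D q‖ ≤ L * ‖p - q‖ ^ 2 := by
  have htaylor := norm_sub_sub_fderiv_le_of_lipschitz_fderiv hU hUconv hD hL hq hp
  have htaylor_refl := norm_sub_sub_fderiv_le_of_lipschitz_fderiv hU hUconv hD hL hq hrefl
  have hrefl_sub : (2 : ℝ) • q - p - q = -(p - q) := by module
  rw [hrefl_sub, norm_neg, map_neg] at htaylor_refl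
  have hsplit : (2 : ℝ)⁻¹ • (D p + D ((2 : ℝ) • q - p)) - D q
      = (2 : ℝ)⁻¹ • ((D p - D q - fderiv ℝ D q (p - q))
        + (D ((2 : ℝ) • q - p) - D q - -fderiv ℝ D q (p - q))) := by
    module
  calc ‖(2 : ℝ)⁻¹ • (D p + D ((2 : ℝ) • q - p)) - D q‖
      ≤ (2 : ℝ)⁻¹ * (L * ‖p - q‖ ^ 2 + L * ‖p - q‖ ^ 2) := by
        rw [hsplit, norm_smul, Real.norm_of_nonneg (by norm_num)]
        gcongr
        exact (norm_add_le _ _).trans (add_le_add htaylor htaylor_refl)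
    _ = L * ‖p - q‖ ^ 2 := by ring

end LipschitzFDeriv

/-- reflection de-biasing bound, Eqs. (proof-feasibility-4)–
(proof-feasibility-6) in the proof of Lemma 5 of the paper: if `D` is
continuously differentiable on an open convex set `U` with `L_D`-Lipschitz
Jacobian and `p, q ∈ U` are such that the reflected point `p̃ = 2q − p` also
lies in `U`, then `‖(D(p) + D(p̃))/2 − D(q)‖ ≤ L_D ‖p − q‖²`. -/
theorem stmt_11 {N : ℕ}
    (U : Set (EuclideanSpace ℝ (Fin N))) (hU : IsOpen U) (hUconv : Convex ℝ U)
    (D : EuclideanSpace ℝ (Fin N) → EuclideanSpace ℝ (Fin N))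
    (hD : ContDiffOn ℝ 1 D U)
    (LD : ℝ)
    (hLD : ∀ x ∈ U, ∀ y ∈ U, ‖fderiv ℝ D x - fderiv ℝ D y‖ ≤ LD * ‖x - y‖)
    (p q : EuclideanSpace ℝ (Fin N)) (hp : p ∈ U) (hq : q ∈ U)
    (hrefl : (2 : ℝ) • q - p ∈ U) :
    ‖(2 : ℝ)⁻¹ • (D p + D ((2 : ℝ) • q - p)) - D q‖ ≤ LD * ‖p - q‖ ^ 2 :=
  norm_inv_two_smul_add_reflect_sub_le_of_lipschitz_fderiv hU hUconv
    (hD.differentiableOn one_ne_zero) hLD hp hq hrefl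
end

section
/- Let U ⊆ ℝ^N, f : U → ℝ, D : U → ℝ^N, A an M×N real matrix, γ ∈ ℝ^M, and λ ∈ ℝ^M with λ ≥ 0 componentwise. Define ℒ(p) = f(p) − ⟨λ, A D(p) − γ⟩ and let Q* = sup_{p ∈ U} ℒ(p). Suppose p° ∈ U satisfies A D(p°) ≤ γ componentwise, and suppose p, p̃ ∈ U and α, α̃, β ≥ 0 satisfy Q* − ℒ(p) ≤ α, Q* − ℒ(p̃) ≤ α̃, and ⟨λ, A·(D(p) + D(p̃))/2 − γ⟩ ≥ −β. Then ( f(p) + f(p̃) )/2 ≥ f(p°) − (α + α̃)/2 − β. -/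
open scoped RealInnerProductSpace

/-!
Weak duality gives `Q* ≥ ℒ(p°) ≥ f(p°)`, since `λ ≥ 0` and `A D(p°) ≤ γ` make the penalty
`⟨λ, A D(p°) − γ⟩` nonpositive. The penalty is affine in the consumption, so at the averaged
consumption it is the mean of the penalties at `p` and `p̃`; adding the two gap bounds and the
balance bound then gives the claim.
-/

theorem EuclideanSpace.inner_sub_nonpos_of_nonneg_of_le {ι : Type*} [Fintype ι]
    {w x y : EuclideanSpace ℝ ι} (hw : ∀ i, 0 ≤ w i) (hxy : ∀ i, x i ≤ y i) :
    ⟪w, x - y⟫ ≤ 0 := by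
  rw [PiLp.inner_apply]
  exact Finset.sum_nonpos fun i _ =>
    mul_nonpos_of_nonpos_of_nonneg (sub_nonpos.2 (hxy i)) (hw i)

theorem inner_map_midpoint_sub {E F G : Type*} [AddCommGroup E] [Module ℝ E]
    [NormedAddCommGroup F] [InnerProductSpace ℝ F] [FunLike G E F] [LinearMapClass G ℝ E F]
    (A : G) (w c : F) (a b : E) :
    ⟪w, A ((2 : ℝ)⁻¹ • (a + b)) - c⟫ = (⟪w, A a - c⟫ + ⟪w, A b - c⟫) / 2 := by
  rw [map_smul, map_add]
  simp only [inner_sub_right, inner_add_right, inner_smul_right]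
  ring

theorem le_of_isLUB_lagrangian_of_feasible {X ι : Type*} [Fintype ι] {U : Set X} {f : X → ℝ}
    {g : X → EuclideanSpace ℝ ι} {γ lam : EuclideanSpace ℝ ι} {Q : ℝ}
    (hQ : IsLUB ((fun p => f p - ⟪lam, g p - γ⟫) '' U) Q) (hlam : ∀ j, 0 ≤ lam j)
    {p₀ : X} (hp₀ : p₀ ∈ U) (hfeas : ∀ j, g p₀ j ≤ γ j) :
    f p₀ ≤ Q := by
  have hpenalty := EuclideanSpace.inner_sub_nonpos_of_nonneg_of_le hlam hfeas
  have hlagr : f p₀ - ⟪lam, g p₀ - γ⟫ ≤ Q := hQ.1 ⟨p₀, hp₀, rfl⟩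
  linarith

theorem stmt_14_general {N M : ℕ}
    (U : Set (EuclideanSpace ℝ (Fin N)))
    (f : EuclideanSpace ℝ (Fin N) → ℝ)
    (D : EuclideanSpace ℝ (Fin N) → EuclideanSpace ℝ (Fin N))
    (A : EuclideanSpace ℝ (Fin N) →L[ℝ] EuclideanSpace ℝ (Fin M))
    (γ : EuclideanSpace ℝ (Fin M))
    (lam : EuclideanSpace ℝ (Fin M)) (hlam : ∀ j, 0 ≤ lam j)
    (Qstar : ℝ)
    (hQstar : IsLUB ((fun p => f p - ⟪lam, A (D p) - γ⟫) '' U) Qstar)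
    (p₀ : EuclideanSpace ℝ (Fin N)) (hp₀ : p₀ ∈ U)
    (hfeas : ∀ j, A (D p₀) j ≤ γ j)
    (p ptilde : EuclideanSpace ℝ (Fin N))
    (α αtilde β : ℝ)
    (hgap : Qstar - (f p - ⟪lam, A (D p) - γ⟫) ≤ α)
    (hgapt : Qstar - (f ptilde - ⟪lam, A (D ptilde) - γ⟫) ≤ αtilde)
    (hbal : ⟪lam, A ((2 : ℝ)⁻¹ • (D p + D ptilde)) - γ⟫ ≥ -β) :
    (f p + f ptilde) / 2 ≥ f p₀ - (α + αtilde) / 2 - β := by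
  have hweak : f p₀ ≤ Qstar := le_of_isLUB_lagrangian_of_feasible hQstar hlam hp₀ hfeas
  rw [inner_map_midpoint_sub] at hbal
  linarith

/-- revenue lower bound via weak duality, Eqs.
(proof-primal-opt-8)–(proof-primal-opt-11) in the proof of Lemma 7 of the
paper: with `ℒ(p) = f(p) − ⟨λ, A D(p) − γ⟩` and `Q* = sup_{p ∈ U} ℒ(p)`, if
`p° ∈ U` satisfies `A D(p°) ≤ γ` componentwise, `λ ≥ 0`, and
`Q* − ℒ(p) ≤ α`, `Q* − ℒ(p̃) ≤ α̃`, `⟨λ, A (D(p)+D(p̃))/2 − γ⟩ ≥ −β`, then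
`(f(p) + f(p̃))/2 ≥ f(p°) − (α + α̃)/2 − β`. -/
theorem stmt_14 {N M : ℕ}
    (U : Set (EuclideanSpace ℝ (Fin N)))
    (f : EuclideanSpace ℝ (Fin N) → ℝ)
    (D : EuclideanSpace ℝ (Fin N) → EuclideanSpace ℝ (Fin N))
    (A : EuclideanSpace ℝ (Fin N) →L[ℝ] EuclideanSpace ℝ (Fin M))
    (γ : EuclideanSpace ℝ (Fin M))
    (lam : EuclideanSpace ℝ (Fin M)) (hlam : ∀ j, 0 ≤ lam j)
    (Qstar : ℝ)
    (hQstar : IsLUB ((fun p => f p - ⟪lam, A (D p) - γ⟫) '' U) Qstar)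
    (p₀ : EuclideanSpace ℝ (Fin N)) (hp₀ : p₀ ∈ U)
    (hfeas : ∀ j, A (D p₀) j ≤ γ j)
    (p ptilde : EuclideanSpace ℝ (Fin N)) (hp : p ∈ U) (hpt : ptilde ∈ U)
    (α αtilde β : ℝ) (hα : 0 ≤ α) (hαt : 0 ≤ αtilde) (hβ : 0 ≤ β)
    (hgap : Qstar - (f p - ⟪lam, A (D p) - γ⟫) ≤ α)
    (hgapt : Qstar - (f ptilde - ⟪lam, A (D ptilde) - γ⟫) ≤ αtilde)
    (hbal : ⟪lam, A ((2 : ℝ)⁻¹ • (D p + D ptilde)) - γ⟫ ≥ -β) :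
    (f p + f ptilde) / 2 ≥ f p₀ - (α + αtilde) / 2 - β :=
  stmt_14_general U f D A γ lam hlam Qstar hQstar p₀ hp₀ hfeas p ptilde α αtilde β hgap hgapt hbal
end

section
/- Let Λ ⊆ ℝ^M be a nonempty closed convex set, μ ≥ 0, L > 0 and η = 1/L. Let Q : ℝ^M → ℝ be differentiable with L-Lipschitz gradient and such that h(λ) := Q(λ) − (μ/2)‖λ‖₂² is convex. Fix λ_s ∈ Λ and e ∈ ℝ^M, and let λ_{s+1} = argmin_{λ ∈ Λ} { ⟨∇h(λ_s) + e, λ⟩ + (μ/2)‖λ‖₂² + (1/(2η))‖λ − λ_s‖₂² }. Then for every λ ∈ Λ: ((μ + 1/η)/2) ‖λ − λ_{s+1}‖₂² + Q(λ_{s+1}) ≤ Q(λ) + (1/(2η)) ‖λ − λ_s‖₂² + ‖e‖₂ ‖λ − λ_{s+1}‖₂. -/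
/-!
Write `h = Q - (μ/2)‖·‖²` and `G` for the objective minimized by `λ_{s+1}`. Three inequalities are
added up. Since `Q` has an `L`-Lipschitz gradient, `Q` lies below its quadratic model at `λ_s`;
subtracting `(μ/2)‖·‖²` turns this into the same bound for `h` with curvature `L - μ ≤ L`. Convexity
of `h` puts it above its tangent plane at `λ_s`. Finally `G` is an affine function plus
`((μ + L)/2)‖·‖²`, hence `(μ + L)`-strongly convex, so it grows at least quadratically away from its
minimizer on `Λ`. The linear terms then telescope to `⟨e, λ - λ_{s+1}⟩`, which Cauchy–Schwarz
bounds by `‖e‖ ‖λ - λ_{s+1}‖`.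
-/

open scoped RealInnerProductSpace

theorem StrongConvexOn.add_sq_le_of_isMinOn {E : Type*} [NormedAddCommGroup E]
    [NormedSpace ℝ E] {s : Set E} {m : ℝ} {f : E → ℝ} {x y : E} (hf : StrongConvexOn s m f)
    (hmin : IsMinOn f s x) (hx : x ∈ s) (hy : y ∈ s) :
    f x + m / 2 * ‖y - x‖ ^ 2 ≤ f y := by
  have hseg : ∀ t ∈ Set.Ioo (0 : ℝ) 1, f x + (1 - t) * (m / 2 * ‖y - x‖ ^ 2) ≤ f y := by
    intro t ht
    have hconv := hf.2 hy hx ht.1.le (sub_nonneg.2 ht.2.le) (add_sub_cancel t 1)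
    have hle := isMinOn_iff.1 hmin _ <|
      hf.1 hy hx ht.1.le (sub_nonneg.2 ht.2.le) (add_sub_cancel t 1)
    simp only [smul_eq_mul] at hconv
    refine le_of_mul_le_mul_left ?_ ht.1
    linarith
  refine le_of_tendsto ?_ (Filter.eventually_of_mem (Ioo_mem_nhdsGT zero_lt_one) hseg)
  have hcont : Continuous fun t : ℝ => f x + (1 - t) * (m / 2 * ‖y - x‖ ^ 2) := by fun_prop
  simpa using (hcont.tendsto 0).mono_left nhdsWithin_le_nhds

section InnerProductSpace

variable {F : Type*} [NormedAddCommGroup F] [InnerProductSpace ℝ F] {f : F → ℝ} {g x y : F}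

theorem strongConvexOn_inner_add_sq_add_sq {s : Set F} (hs : Convex ℝ s) (c z : F) (μ κ : ℝ) :
    StrongConvexOn s (μ + κ) fun x => ⟪c, x⟫ + μ / 2 * ‖x‖ ^ 2 + κ / 2 * ‖x - z‖ ^ 2 := by
  have haffine : ∀ x, ⟪c, x⟫ + μ / 2 * ‖x‖ ^ 2 + κ / 2 * ‖x - z‖ ^ 2 - (μ + κ) / 2 * ‖x‖ ^ 2
      = ⟪c - κ • z, x⟫ + κ / 2 * ‖z‖ ^ 2 := fun x => by
    rw [norm_sub_sq_real, inner_sub_left, real_inner_smul_left, real_inner_comm x z]; ring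
  rw [strongConvexOn_iff_convex]
  exact (((innerSL ℝ (c - κ • z)).toLinearMap.convexOn hs).add_const _).congr
    fun x _ => (haffine x).symm

theorem sub_half_mul_norm_sq_le_of_le {L μ : ℝ}
    (h : f y ≤ f x + ⟪g, y - x⟫ + L / 2 * ‖y - x‖ ^ 2) :
    f y - μ / 2 * ‖y‖ ^ 2 ≤ f x - μ / 2 * ‖x‖ ^ 2 + ⟪g - μ • x, y - x⟫
      + (L - μ) / 2 * ‖y - x‖ ^ 2 := by
  have hsq : ‖y - x‖ ^ 2 = ‖y‖ ^ 2 - 2 * ⟪x, y - x⟫ - ‖x‖ ^ 2 := by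
    rw [norm_sub_sq_real, inner_sub_right, real_inner_self_eq_norm_sq, real_inner_comm]; ring
  rw [inner_sub_left, real_inner_smul_left]
  linear_combination h + μ / 2 * hsq

variable [CompleteSpace F]

theorem HasGradientAt.sub_half_mul_norm_sq (hf : HasGradientAt f g x) (μ : ℝ) :
    HasGradientAt (fun y => f y - μ / 2 * ‖y‖ ^ 2) (g - μ • x) x := by
  rw [hasGradientAt_iff_hasFDerivAt] at hf ⊢
  refine (hf.sub ((hasStrictFDerivAt_norm_sq x).hasFDerivAt.const_mul (μ / 2))).congr_fderiv ?_
  ext v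
  simp only [sub_apply, InnerProductSpace.toDual_apply_apply, smul_apply, coe_innerSL_apply,
    nsmul_eq_mul, Nat.cast_ofNat, smul_eq_mul, map_sub, map_smul, sub_right_inj]
  ring

theorem HasGradientAt.hasDerivAt_comp_lineMap {t : ℝ}
    (hf : HasGradientAt f g (AffineMap.lineMap x y t)) :
    HasDerivAt (f ∘ AffineMap.lineMap x y) ⟪g, y - x⟫ t := by
  rw [hasGradientAt_iff_hasFDerivAt] at hf
  simpa using hf.comp_hasDerivAt t AffineMap.hasDerivAt_lineMap

theorem ConvexOn.add_inner_sub_le_of_hasGradientAt {s : Set F} (hf : ConvexOn ℝ s f)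
    (hx : x ∈ s) (hy : y ∈ s) (hg : HasGradientAt f g x) : f x + ⟪g, y - x⟫ ≤ f y := by
  have hline : ConvexOn ℝ (AffineMap.lineMap x y ⁻¹' s) (f ∘ AffineMap.lineMap x y) :=
    hf.comp_affineMap _
  have hslope := hline.le_slope_of_hasDerivAt (x := 0) (y := 1) (by simpa using hx)
    (by simpa using hy) zero_lt_one
    (HasGradientAt.hasDerivAt_comp_lineMap (by simpa using hg))
  rw [slope_def_field] at hslope
  simp only [Function.comp_apply, AffineMap.lineMap_apply_one, AffineMap.lineMap_apply_zero,
    sub_zero, div_one] at hslope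
  linarith

theorem le_add_inner_gradient_add_sq_of_lipschitz (hf : Differentiable ℝ f) {L : ℝ}
    (hlip : ∀ x y, ‖gradient f x - gradient f y‖ ≤ L * ‖x - y‖) (x y : F) :
    f y ≤ f x + ⟪gradient f x, y - x⟫ + L / 2 * ‖y - x‖ ^ 2 := by
  set φ : ℝ → ℝ := fun t => f (AffineMap.lineMap x y t) - t * ⟪gradient f x, y - x⟫
  have hφ : ∀ t, HasDerivAt φ (⟪gradient f (AffineMap.lineMap x y t) - gradient f x, y - x⟫) t := by
    intro t
    rw [inner_sub_left]
    exact ((hf _).hasGradientAt.hasDerivAt_comp_lineMap).sub ((hasDerivAt_id t).mul_const _)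
      |>.congr_deriv (by simp)
  have hbound : ∀ t ∈ Set.Ico (0 : ℝ) 1,
      ⟪gradient f (AffineMap.lineMap x y t) - gradient f x, y - x⟫ ≤ L * ‖y - x‖ ^ 2 * t := by
    intro t ht
    calc _ ≤ ‖gradient f (AffineMap.lineMap x y t) - gradient f x‖ * ‖y - x‖ :=
          real_inner_le_norm _ _
      _ ≤ L * ‖AffineMap.lineMap x y t - x‖ * ‖y - x‖ := by gcongr; exact hlip _ _
      _ = L * ‖y - x‖ ^ 2 * t := by
          rw [← dist_eq_norm, dist_lineMap_left, dist_eq_norm', Real.norm_of_nonneg ht.1]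
          ring
  have key := image_le_of_deriv_right_le_deriv_boundary (a := 0) (b := 1) (f := φ)
    (B := fun t => φ 0 + L / 2 * ‖y - x‖ ^ 2 * t ^ 2) (B' := fun t => L * ‖y - x‖ ^ 2 * t)
    (fun t _ => (hφ t).continuousAt.continuousWithinAt) (fun t _ => (hφ t).hasDerivWithinAt)
    (by simp) (by fun_prop)
    (fun t _ =>
      ((((hasDerivAt_pow 2 t).const_mul _).const_add _).congr_deriv (by ring)).hasDerivWithinAt)
    hbound (Set.right_mem_Icc.2 zero_le_one)
  simp only [φ, AffineMap.lineMap_apply_zero, AffineMap.lineMap_apply_one, zero_mul, sub_zero,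
    one_mul, one_pow, mul_one] at key
  linarith

end InnerProductSpace

theorem stmt_15_general {M : ℕ}
    (Λ : Set (EuclideanSpace ℝ (Fin M)))
    (hΛconv : Convex ℝ Λ)
    (μ : ℝ) (hμ : 0 ≤ μ) (L : ℝ) (η : ℝ) (hη : η = 1 / L)
    (Q : EuclideanSpace ℝ (Fin M) → ℝ) (hQdiff : Differentiable ℝ Q)
    (hQlip : ∀ x y : EuclideanSpace ℝ (Fin M),
      ‖gradient Q x - gradient Q y‖ ≤ L * ‖x - y‖)
    (hhconv : ConvexOn ℝ Set.univ (fun x => Q x - μ / 2 * ‖x‖ ^ 2))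
    (lamS : EuclideanSpace ℝ (Fin M))
    (e : EuclideanSpace ℝ (Fin M))
    (lamNext : EuclideanSpace ℝ (Fin M)) (hNmem : lamNext ∈ Λ)
    (hNmin : IsMinOn
      (fun x => ⟪gradient (fun y => Q y - μ / 2 * ‖y‖ ^ 2) lamS + e, x⟫
        + μ / 2 * ‖x‖ ^ 2 + 1 / (2 * η) * ‖x - lamS‖ ^ 2) Λ lamNext) :
    ∀ lam ∈ Λ,
      (μ + 1 / η) / 2 * ‖lam - lamNext‖ ^ 2 + Q lamNext
        ≤ Q lam + 1 / (2 * η) * ‖lam - lamS‖ ^ 2 + ‖e‖ * ‖lam - lamNext‖ := by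
  intro lam hlam
  set g := gradient Q lamS - μ • lamS
  have hgrad : HasGradientAt (fun y => Q y - μ / 2 * ‖y‖ ^ 2) g lamS :=
    (hQdiff lamS).hasGradientAt.sub_half_mul_norm_sq μ
  have hL : 1 / η = L := by rw [hη, one_div_one_div]
  have hL2 : 1 / (2 * η) = L / 2 := by rw [← hL]; ring
  rw [hgrad.gradient, hL2] at hNmin
  rw [hL, hL2]
  have hdescent := sub_half_mul_norm_sq_le_of_le (μ := μ)
    (le_add_inner_gradient_add_sq_of_lipschitz hQdiff hQlip lamS lamNext)
  have hsupport := hhconv.add_inner_sub_le_of_hasGradientAt (Set.mem_univ _) (Set.mem_univ lam)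
    hgrad
  have hprox := (strongConvexOn_inner_add_sq_add_sq hΛconv (g + e) lamS μ L).add_sq_le_of_isMinOn
    hNmin hNmem hlam
  have htelescope : ⟪g, lamNext - lamS⟫ - ⟪g, lam - lamS⟫ + ⟪g + e, lam⟫ - ⟪g + e, lamNext⟫
      = ⟪e, lam - lamNext⟫ := by
    simp only [inner_add_left, inner_sub_right]; ring
  have herr : ⟪e, lam - lamNext⟫ ≤ ‖e‖ * ‖lam - lamNext‖ := real_inner_le_norm _ _
  have hcurv : 0 ≤ μ * ‖lamNext - lamS‖ ^ 2 := by positivity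
  linarith

/-- one-step inequality for inexact proximal gradient
descent, Eq. (proof-inexact-md-4) in the proof of Lemma 9 of the paper: let
`Λ` be nonempty closed convex, `μ ≥ 0`, `L > 0`, `η = 1/L`, and `Q`
differentiable with `L`-Lipschitz gradient such that
`h(λ) = Q(λ) − (μ/2)‖λ‖²` is convex. If `λ_{s+1}` minimizes
`λ ↦ ⟨∇h(λ_s) + e, λ⟩ + (μ/2)‖λ‖² + (1/(2η))‖λ − λ_s‖²` over `Λ`, then for
every `λ ∈ Λ`,
`((μ + 1/η)/2)‖λ − λ_{s+1}‖² + Q(λ_{s+1})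
  ≤ Q(λ) + (1/(2η))‖λ − λ_s‖² + ‖e‖ ‖λ − λ_{s+1}‖`. -/
theorem stmt_15 {M : ℕ}
    (Λ : Set (EuclideanSpace ℝ (Fin M)))
    (hΛne : Λ.Nonempty) (hΛcl : IsClosed Λ) (hΛconv : Convex ℝ Λ)
    (μ : ℝ) (hμ : 0 ≤ μ) (L : ℝ) (hL : 0 < L) (η : ℝ) (hη : η = 1 / L)
    (Q : EuclideanSpace ℝ (Fin M) → ℝ) (hQdiff : Differentiable ℝ Q)
    (hQlip : ∀ x y : EuclideanSpace ℝ (Fin M),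
      ‖gradient Q x - gradient Q y‖ ≤ L * ‖x - y‖)
    (hhconv : ConvexOn ℝ Set.univ (fun x => Q x - μ / 2 * ‖x‖ ^ 2))
    (lamS : EuclideanSpace ℝ (Fin M)) (hlamS : lamS ∈ Λ)
    (e : EuclideanSpace ℝ (Fin M))
    (lamNext : EuclideanSpace ℝ (Fin M)) (hNmem : lamNext ∈ Λ)
    (hNmin : IsMinOn
      (fun x => ⟪gradient (fun y => Q y - μ / 2 * ‖y‖ ^ 2) lamS + e, x⟫
        + μ / 2 * ‖x‖ ^ 2 + 1 / (2 * η) * ‖x - lamS‖ ^ 2) Λ lamNext) :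
    ∀ lam ∈ Λ,
      (μ + 1 / η) / 2 * ‖lam - lamNext‖ ^ 2 + Q lamNext
        ≤ Q lam + 1 / (2 * η) * ‖lam - lamS‖ ^ 2 + ‖e‖ * ‖lam - lamNext‖ :=
  stmt_15_general Λ hΛconv μ hμ L η hη Q hQdiff hQlip hhconv lamS e lamNext hNmem hNmin
end

section
/- Let m ≥ 1, a ≥ 0, and let b_1, …, b_m and v_0, v_1, …, v_m be nonnegative reals such that v_0² ≤ a and, for every t ∈ {1, …, m}, v_t² ≤ a + ∑_{s=1}^t b_s v_s. Then √( a + ∑_{s=1}^m b_s v_s ) ≤ √a + ∑_{s=1}^m b_s; in particular v_m ≤ √a + ∑_{s=1}^m b_s. -/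
lemma key_quad (x y c : ℝ) (hy : 0 ≤ y) (hc : 0 ≤ c)
    (h : x ^ 2 ≤ y ^ 2 + c * x) : x ≤ y + c := by
  by_contra hlt
  push_neg at hlt
  nlinarith

/-- self-bounding sequence lemma used in the proof of Lemma 9
of the paper: if `a ≥ 0`, `b_1, …, b_m` and `v_0, …, v_m` are nonnegative,
`v_0² ≤ a`, and `v_t² ≤ a + ∑_{s=1}^t b_s v_s` for all `1 ≤ t ≤ m`, then
`√(a + ∑_{s=1}^m b_s v_s) ≤ √a + ∑_{s=1}^m b_s`, and in particular
`v_m ≤ √a + ∑_{s=1}^m b_s`. -/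
theorem stmt_17 (m : ℕ) (hm : 1 ≤ m) (a : ℝ) (ha : 0 ≤ a)
    (b v : ℕ → ℝ)
    (hb : ∀ s, 1 ≤ s → s ≤ m → 0 ≤ b s)
    (hv : ∀ t, t ≤ m → 0 ≤ v t)
    (hv0 : v 0 ^ 2 ≤ a)
    (hrec : ∀ t, 1 ≤ t → t ≤ m →
      v t ^ 2 ≤ a + ∑ s ∈ Finset.Icc 1 t, b s * v s) :
    Real.sqrt (a + ∑ s ∈ Finset.Icc 1 m, b s * v s)
        ≤ Real.sqrt a + ∑ s ∈ Finset.Icc 1 m, b s ∧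
      v m ≤ Real.sqrt a + ∑ s ∈ Finset.Icc 1 m, b s := by
  set A : ℕ → ℝ := fun t => a + ∑ s ∈ Finset.Icc 1 t, b s * v s with hA
  have hAnonneg : ∀ t, t ≤ m → 0 ≤ A t := by
    intro t ht
    have : 0 ≤ ∑ s ∈ Finset.Icc 1 t, b s * v s := by
      apply Finset.sum_nonneg
      intro s hs
      simp only [Finset.mem_Icc] at hs
      exact mul_nonneg (hb s hs.1 (hs.2.trans ht)) (hv s (hs.2.trans ht))
    simpa [hA] using add_nonneg ha this
  have main : ∀ t, t ≤ m → Real.sqrt (A t) ≤ Real.sqrt a + ∑ s ∈ Finset.Icc 1 t, b s := by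
    intro t
    induction t with
    | zero => intro _; simp [hA]
    | succ n ih =>
      intro hn1
      have hnm : n ≤ m := Nat.le_of_succ_le hn1
      have ihn := ih hnm
      have hvle : v (n+1) ≤ Real.sqrt (A (n+1)) := by
        have := hrec (n+1) (Nat.succ_le_succ (Nat.zero_le n)) hn1
        have h1 : v (n+1) ^ 2 ≤ A (n+1) := this
        calc v (n+1) = Real.sqrt (v (n+1) ^ 2) := by
              rw [Real.sqrt_sq (hv (n+1) hn1)]
          _ ≤ Real.sqrt (A (n+1)) := Real.sqrt_le_sqrt h1
      have hstep : A (n+1) = A n + b (n+1) * v (n+1) := by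
        simp [hA, Finset.sum_Icc_succ_top (Nat.succ_le_succ (Nat.zero_le n))]
        ring
      have hbn : 0 ≤ b (n+1) := hb (n+1) (Nat.succ_le_succ (Nat.zero_le n)) hn1
      have hkey : Real.sqrt (A (n+1)) ≤ Real.sqrt (A n) + b (n+1) := by
        apply key_quad _ _ _ (Real.sqrt_nonneg _) hbn
        rw [Real.sq_sqrt (hAnonneg (n+1) hn1), Real.sq_sqrt (hAnonneg n hnm)]
        calc A (n+1) = A n + b (n+1) * v (n+1) := hstep
          _ ≤ A n + b (n+1) * Real.sqrt (A (n+1)) := by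
              have := mul_le_mul_of_nonneg_left hvle hbn
              linarith
      rw [Finset.sum_Icc_succ_top (Nat.succ_le_succ (Nat.zero_le n))]
      linarith
  have h1 := main m le_rfl
  refine ⟨h1, ?_⟩
  have hvm : v m ≤ Real.sqrt (A m) := by
    have h2 : v m ^ 2 ≤ A m := hrec m hm le_rfl
    calc v m = Real.sqrt (v m ^ 2) := by rw [Real.sqrt_sq (hv m le_rfl)]
      _ ≤ Real.sqrt (A m) := Real.sqrt_le_sqrt h2
  exact hvm.trans h1
end
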